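/- arXiv:2505.22529 — 5 statements merged into one kernel-verified Lean document; each statement's English description precedes it below -/
import Mathlib

section
/- For any F ∈ ℝ^N with 0 < F_i < 1/α for all i, the entropy dissipation is nonpositive: ⟨log(F/Ψ_α(F)), Q^α(F)⟩ ≤ 0, where log(F/Ψ_α(F)) denotes the vector with components log(F_i/Ψ_α(F_i)). -/
open Real Finset Filter Set

noncomputable def Psi (α y : ℝ) : ℝ :=
  (1 - α * y) ^ α * (1 + (1 - α) * y) ^ (1 - α)

noncomputable def Qop {N : ℕ} (α : ℝ) (Γ : Fin N → Fin N → Fin N → Fin N → ℝ)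
    (F : Fin N → ℝ) : Fin N → ℝ := fun i =>
  ∑ j, ∑ k, ∑ l, Γ i j k l *
    (F k * F l * Psi α (F i) * Psi α (F j) - F i * F j * Psi α (F k) * Psi α (F l))

def dotN {N : ℕ} (u v : Fin N → ℝ) : ℝ := ∑ i, u i * v i

def GammaOK {N d : ℕ} (p : Fin N → Fin d → ℝ)
    (Γ : Fin N → Fin N → Fin N → Fin N → ℝ) : Prop :=
  (∀ i j k l, 0 ≤ Γ i j k l) ∧
  (∀ i j k l, Γ i j k l = Γ j i k l) ∧
  (∀ i j k l, Γ i j k l = Γ k l i j) ∧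
  (∀ i j k l, Γ i j k l ≠ 0 →
    (∀ m, p i m + p j m = p k m + p l m) ∧
    (∑ m, (p i m) ^ 2) + (∑ m, (p j m) ^ 2) = (∑ m, (p k m) ^ 2) + (∑ m, (p l m) ^ 2))

def IsCollInv {N : ℕ} (Γ : Fin N → Fin N → Fin N → Fin N → ℝ) (φ : Fin N → ℝ) : Prop :=
  ∀ i j k l, Γ i j k l ≠ 0 → φ i + φ j = φ k + φ l

def IsNormal {N d : ℕ} (p : Fin N → Fin d → ℝ)
    (Γ : Fin N → Fin N → Fin N → Fin N → ℝ) : Prop :=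
  ∀ φ : Fin N → ℝ, IsCollInv Γ φ →
    ∃ (a c : ℝ) (b : Fin d → ℝ), ∀ i, φ i = a + (∑ m, b m * p i m) + c * ∑ m, (p i m) ^ 2

def IsEquilib {N d : ℕ} (α : ℝ) (p : Fin N → Fin d → ℝ) (P : Fin N → ℝ) : Prop :=
  (∀ i, 0 < P i ∧ P i < 1 / α) ∧
  ∃ (K : ℝ) (b : Fin d → ℝ) (c : ℝ), 0 < K ∧
    ∀ i, P i / Psi α (P i) = K * Real.exp (-(∑ m, b m * p i m) - c * ∑ m, (p i m) ^ 2)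

noncomputable def muF (α y : ℝ) : ℝ :=
  y * Real.log y + (1 - α * y) * Real.log (1 - α * y)
    - (1 + (1 - α) * y) * Real.log (1 + (1 - α) * y)

noncomputable def Rfun {N : ℕ} (α : ℝ) (P : Fin N → ℝ) (i : Fin N) : ℝ :=
  P i * (1 - α * P i) * (1 + (1 - α) * P i)

noncomputable def Pcoef {N : ℕ} (α : ℝ) (P : Fin N → ℝ) (i j k l : Fin N) : ℝ :=
  P i * P j * Psi α (P k) * Psi α (P l) / Real.sqrt (Rfun α P i)

noncomputable def Lop {N : ℕ} (α : ℝ) (Γ : Fin N → Fin N → Fin N → Fin N → ℝ)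
    (P : Fin N → ℝ) (f : Fin N → ℝ) : Fin N → ℝ := fun i =>
  ∑ j, ∑ k, ∑ l, Γ i j k l / Real.sqrt (Rfun α P i) *
    (Pcoef α P i j k l * f i + Pcoef α P j i k l * f j
      - Pcoef α P k l i j * f k - Pcoef α P l k i j * f l)

/-!
With `w i = F i / Ψ_α (F i)` the gain-minus-loss term of `Q^α` is
`Ψ_α(F_i) Ψ_α(F_j) Ψ_α(F_k) Ψ_α(F_l) (w_k w_l - w_i w_j)`, so after absorbing the four
filling factors into the (still symmetric, nonnegative) kernel the dissipation is the classical
one, `∑ Γ (exp (h_k + h_l) - exp (h_i + h_j)) h_i` with `h = log w`. The symmetries of `Γ`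
turn `h_i` into `(h_i + h_j - h_k - h_l) / 4`, and each term is then `≤ 0` by monotonicity
of `exp`.
-/

lemma Psi_pos {α y : ℝ} (hy : 0 < y) (hyα : y < 1 / α) : 0 < Psi α y := by
  have hα : 0 < α := one_div_pos.mp (hy.trans hyα)
  have hαy : α * y < 1 := by rwa [lt_div_iff₀ hα, mul_comm] at hyα
  unfold Psi
  have : 0 < 1 + (1 - α) * y := by linarith
  exact mul_pos (rpow_pos_of_pos (by linarith) _) (rpow_pos_of_pos this _)

lemma four_mul_sum_sum_mul_eq_sum_sum_mul {κ : Type*} [Fintype κ] (σ : Equiv.Perm κ)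
    (K : κ → κ → ℝ) (L : κ → ℝ) (hanti : ∀ p q, K q p = -K p q)
    (hσ : ∀ p q, K (σ p) q = K p q) :
    4 * ∑ p, ∑ q, K p q * L p = ∑ p, ∑ q, K p q * (L p + L (σ p) - L q - L (σ q)) := by
  have hσ' : ∀ p q, K p (σ q) = K p q := fun p q => by rw [hanti, hσ, ← hanti]
  have hcomp : ∑ p, ∑ q, K p q * L (σ p) = ∑ p, ∑ q, K p q * L p := by
    rw [← Equiv.sum_comp σ (fun p => ∑ q, K p q * L p)]
    simp only [hσ]
  have hswap : ∑ p, ∑ q, K p q * L q = -∑ p, ∑ q, K p q * L p := by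
    rw [Finset.sum_comm, ← Finset.sum_neg_distrib]
    refine Finset.sum_congr rfl fun p _ => ?_
    rw [← Finset.sum_neg_distrib]
    exact Finset.sum_congr rfl fun q _ => by rw [hanti]; ring
  have hswap' : ∑ p, ∑ q, K p q * L (σ q) = ∑ p, ∑ q, K p q * L q :=
    Finset.sum_congr rfl fun p _ => by
      rw [← Equiv.sum_comp σ (fun q => K p q * L q)]
      simp only [hσ']
  simp only [mul_add, mul_sub, Finset.sum_add_distrib, Finset.sum_sub_distrib]
  rw [hcomp, hswap', hswap]
  ring

theorem sum_mul_collision_exp_nonpos {ι : Type*} [Fintype ι] (Γ : ι → ι → ι → ι → ℝ)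
    (hΓ₀ : ∀ i j k l, 0 ≤ Γ i j k l) (hΓswap : ∀ i j k l, Γ i j k l = Γ j i k l)
    (hΓpair : ∀ i j k l, Γ i j k l = Γ k l i j) (h : ι → ℝ) :
    ∑ i, h i * ∑ j, ∑ k, ∑ l, Γ i j k l * (exp (h k + h l) - exp (h i + h j)) ≤ 0 := by
  let K : ι × ι → ι × ι → ℝ := fun p q =>
    Γ p.1 p.2 q.1 q.2 * (exp (h q.1 + h q.2) - exp (h p.1 + h p.2))
  have hsym := four_mul_sum_sum_mul_eq_sum_sum_mul (Equiv.prodComm ι ι) K (fun p => h p.1)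
    (fun p q => by simp only [K]; rw [hΓpair]; ring)
    (fun p q => by
      simp only [K, Equiv.prodComm_apply, Prod.fst_swap, Prod.snd_swap]
      rw [hΓswap, add_comm (h p.2)])
  simp only [Equiv.prodComm_apply, Prod.fst_swap] at hsym
  have hterm : ∀ p q, K p q * (h p.1 + h p.2 - h q.1 - h q.2) ≤ 0 := by
    rintro ⟨i, j⟩ ⟨k, l⟩
    have hmono := (exp_monotone.monovary monotone_id).sub_mul_sub_nonneg (h i + h j) (h k + h l)
    simp only [K, id] at hmono ⊢
    linarith [mul_nonneg (hΓ₀ i j k l) hmono]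
  have hsum : ∑ i, h i * ∑ j, ∑ k, ∑ l, Γ i j k l * (exp (h k + h l) - exp (h i + h j))
      = ∑ p, ∑ q, K p q * h p.1 := by
    simp only [K, Fintype.sum_prod_type, Finset.mul_sum]
    exact Finset.sum_congr rfl fun i _ => Finset.sum_congr rfl fun j _ =>
      Finset.sum_congr rfl fun k _ => Finset.sum_congr rfl fun l _ => by ring
  have hnonpos : ∑ p, ∑ q, K p q * (h p.1 + h p.2 - h q.1 - h q.2) ≤ 0 :=
    Finset.sum_nonpos fun p _ => Finset.sum_nonpos fun q _ => hterm p q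
  linarith

theorem stmt1_general {N d : ℕ}
    (α : ℝ)
    (p : Fin N → Fin d → ℝ) (Γ : Fin N → Fin N → Fin N → Fin N → ℝ)
    (hΓ : GammaOK p Γ)
    (F : Fin N → ℝ) (hF : ∀ i, 0 < F i ∧ F i < 1 / α) :
    dotN (fun i => Real.log (F i / Psi α (F i))) (Qop α Γ F) ≤ 0 := by
  obtain ⟨hΓ₀, hΓswap, hΓpair, -⟩ := hΓ
  have hΨ : ∀ i, 0 < Psi α (F i) := fun i => Psi_pos (hF i).1 (hF i).2
  have hw : ∀ i, 0 < F i / Psi α (F i) := fun i => div_pos (hF i).1 (hΨ i)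
  set h := fun i => Real.log (F i / Psi α (F i))
  have hexp : ∀ i j, exp (h i + h j) = F i / Psi α (F i) * (F j / Psi α (F j)) := fun i j => by
    rw [exp_add, exp_log (hw i), exp_log (hw j)]
  let W : Fin N → Fin N → Fin N → Fin N → ℝ := fun i j k l =>
    Γ i j k l * (Psi α (F i) * Psi α (F j) * (Psi α (F k) * Psi α (F l)))
  calc dotN h (Qop α Γ F)
      = ∑ i, h i * ∑ j, ∑ k, ∑ l, W i j k l * (exp (h k + h l) - exp (h i + h j)) := by
        refine sum_congr rfl fun i _ => congrArg (h i * ·) <| sum_congr rfl fun j _ =>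
          sum_congr rfl fun k _ => sum_congr rfl fun l _ => ?_
        simp only [W, hexp]
        field_simp [(hΨ _).ne']
    _ ≤ 0 := sum_mul_collision_exp_nonpos W
        (fun i j k l => mul_nonneg (hΓ₀ i j k l)
          (mul_pos (mul_pos (hΨ i) (hΨ j)) (mul_pos (hΨ k) (hΨ l))).le)
        (fun i j k l => by simp only [W]; rw [hΓswap]; ring)
        (fun i j k l => by simp only [W]; rw [hΓpair]; ring) h

/-- the entropy dissipation is nonpositive. -/
theorem stmt1 {N d : ℕ} (hN : 0 < N) (hd : 0 < d)
    (α : ℝ) (hα0 : 0 < α) (hα1 : α < 1)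
    (p : Fin N → Fin d → ℝ) (Γ : Fin N → Fin N → Fin N → Fin N → ℝ)
    (hΓ : GammaOK p Γ)
    (F : Fin N → ℝ) (hF : ∀ i, 0 < F i ∧ F i < 1 / α) :
    dotN (fun i => Real.log (F i / Psi α (F i))) (Qop α Γ F) ≤ 0 :=
  stmt1_general α p Γ hΓ F hF
end

section
/- Fix α ∈ (0,1) and let μ(y) = y log y + (1−αy) log(1−αy) − (1+(1−α)y) log(1+(1−α)y) for 0 < y < 1/α. Then μ(y) ≤ 0 for all y ∈ (0, 1/α), μ is bounded below on (0, 1/α), and μ(y) → 0 as y → 0⁺ and as y → (1/α)⁻. -/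
open Real Finset Filter Set

/-!
With `f x = x * log x`, `a = 1 - α y` and `b = 1 + (1 - α) y = y + a`, we have
`μ y = f y + f a - f (y + a)`, which is `≤ 0` because `f` is superadditive on `[0, ∞)`.
The function `μ` is continuous on all of `ℝ` and vanishes at `0` and at `1/α` (where `a = 0`),
which gives both limits and, by compactness of `[0, 1/α]`, the lower bound.
-/

lemma mul_log_le_mul_log_add {x y : ℝ} (hx : 0 ≤ x) (hy : 0 ≤ y) :
    x * log x ≤ x * log (x + y) := by
  rcases hx.eq_or_lt with rfl | hx
  · simp
  · gcongr
    linarith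

lemma mul_log_add_mul_log_le {x y : ℝ} (hx : 0 ≤ x) (hy : 0 ≤ y) :
    x * log x + y * log y ≤ (x + y) * log (x + y) := by
  have hxy := mul_log_le_mul_log_add hx hy
  have hyx := mul_log_le_mul_log_add hy hx
  rw [add_comm y x] at hyx
  linarith

lemma continuous_muF (α : ℝ) : Continuous (muF α) := by
  unfold muF
  exact (continuous_id.mul_log.add
    (continuous_const.sub (continuous_const.mul continuous_id)).mul_log).sub
      (continuous_const.add (continuous_const.mul continuous_id)).mul_log

lemma muF_zero (α : ℝ) : muF α 0 = 0 := by
  simp [muF]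

lemma muF_one_div {α : ℝ} (hα : α ≠ 0) : muF α (1 / α) = 0 := by
  have ha : 1 - α * (1 / α) = 0 := by field_simp; ring
  have hb : 1 + (1 - α) * (1 / α) = 1 / α := by field_simp; ring
  rw [muF, ha, hb]
  simp

lemma muF_nonpos {α y : ℝ} (hy : 0 ≤ y) (hαy : α * y ≤ 1) : muF α y ≤ 0 := by
  have hb : 1 + (1 - α) * y = y + (1 - α * y) := by ring
  have := mul_log_add_mul_log_le hy (sub_nonneg.mpr hαy)
  rw [muF, hb]
  linarith

theorem stmt7_general (α : ℝ) (hα0 : 0 < α) :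
    (∀ y ∈ Set.Ioo (0 : ℝ) (1 / α), muF α y ≤ 0) ∧
    (∃ C : ℝ, ∀ y ∈ Set.Ioo (0 : ℝ) (1 / α), C ≤ muF α y) ∧
    Filter.Tendsto (muF α) (nhdsWithin 0 (Set.Ioi 0)) (nhds 0) ∧
    Filter.Tendsto (muF α) (nhdsWithin (1 / α) (Set.Iio (1 / α))) (nhds 0) := by
  have hcont := continuous_muF α
  refine ⟨?_, ?_, ?_, ?_⟩
  · rintro y ⟨hy0, hy1⟩
    refine muF_nonpos hy0.le ?_
    rw [lt_div_iff₀ hα0] at hy1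
    linarith
  · obtain ⟨C, hC⟩ := (isCompact_Icc (a := 0) (b := 1 / α)).bddBelow_image hcont.continuousOn
    exact ⟨C, fun y hy => hC (mem_image_of_mem _ (Ioo_subset_Icc_self hy))⟩
  · have h := (hcont.tendsto 0).mono_left (nhdsWithin_le_nhds (s := Ioi 0))
    rwa [muF_zero] at h
  · have h := (hcont.tendsto (1 / α)).mono_left (nhdsWithin_le_nhds (s := Iio (1 / α)))
    rwa [muF_one_div hα0.ne'] at h

/-- `μ` is nonpositive and bounded below on `(0, 1/α)`, with limit `0`
at both endpoints. -/
theorem stmt7 (α : ℝ) (hα0 : 0 < α) (hα1 : α < 1) :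
    (∀ y ∈ Set.Ioo (0 : ℝ) (1 / α), muF α y ≤ 0) ∧
    (∃ C : ℝ, ∀ y ∈ Set.Ioo (0 : ℝ) (1 / α), C ≤ muF α y) ∧
    Filter.Tendsto (muF α) (nhdsWithin 0 (Set.Ioi 0)) (nhds 0) ∧
    Filter.Tendsto (muF α) (nhdsWithin (1 / α) (Set.Iio (1 / α))) (nhds 0) :=
  stmt7_general α hα0
end

section
/- (Uniqueness of the equilibrium distribution with given moments.) Let P and P̃ be equilibrium distributions such that ⟨1,P⟩ = ⟨1,P̃⟩, ⟨p^i,P⟩ = ⟨p^i,P̃⟩ for i = 1,…,d, and ⟨|p|²,P⟩ = ⟨|p|²,P̃⟩. Then P = P̃. -/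
open Real Finset Filter Set

/-! The map `y ↦ log (y / Ψ_α y)` is strictly increasing on `(0, 1/α)`, and for an equilibrium
distribution it is a linear combination of `1`, `p^i`, `|p|²`. Equal moments therefore give
`∑ᵢ (Pᵢ - P̃ᵢ) (log (Pᵢ / Ψ_α Pᵢ) - log (P̃ᵢ / Ψ_α P̃ᵢ)) = 0`, while every summand is
nonnegative and vanishes only where `Pᵢ = P̃ᵢ`. -/

noncomputable def logOverPsi (α y : ℝ) : ℝ :=
  Real.log y - α * Real.log (1 - α * y) - (1 - α) * Real.log (1 + (1 - α) * y)

def InMomentSpan {N d : ℕ} (p : Fin N → Fin d → ℝ) (φ : Fin N → ℝ) : Prop :=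
  ∃ (a c : ℝ) (b : Fin d → ℝ), ∀ i, φ i = a + (∑ m, b m * p i m) + c * ∑ m, (p i m) ^ 2

section Monotone

variable {f : ℝ → ℝ} {s : Set ℝ} {x y : ℝ}

lemma StrictMonoOn.sub_mul_sub_pos (hf : StrictMonoOn f s) (hx : x ∈ s) (hy : y ∈ s)
    (hxy : x ≠ y) : 0 < (x - y) * (f x - f y) := by
  rcases hxy.lt_or_gt with h | h
  · exact mul_pos_of_neg_of_neg (sub_neg.2 h) (sub_neg.2 (hf hx hy h))
  · exact mul_pos (sub_pos.2 h) (sub_pos.2 (hf hy hx h))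

lemma StrictMonoOn.sub_mul_sub_nonneg (hf : StrictMonoOn f s) (hx : x ∈ s) (hy : y ∈ s) :
    0 ≤ (x - y) * (f x - f y) := by
  by_cases hxy : x = y
  · simp [hxy]
  · exact (hf.sub_mul_sub_pos hx hy hxy).le

lemma StrictMonoOn.eq_of_sum_sub_mul_sub_eq_zero {ι : Type*} [Fintype ι] (hf : StrictMonoOn f s)
    {u v : ι → ℝ} (hu : ∀ i, u i ∈ s) (hv : ∀ i, v i ∈ s)
    (h : ∑ i, (u i - v i) * (f (u i) - f (v i)) = 0) : u = v := by
  by_contra hne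
  obtain ⟨i, hi⟩ := Function.ne_iff.mp hne
  refine (Finset.sum_pos' (fun j _ => hf.sub_mul_sub_nonneg (hu j) (hv j))
    ⟨i, Finset.mem_univ i, hf.sub_mul_sub_pos (hu i) (hv i) hi⟩).ne' h

end Monotone

section LogOverPsi

variable {α y : ℝ}

lemma pos_of_mem_Ioo_inv (hα0 : 0 < α) (hy : y ∈ Set.Ioo 0 (1 / α)) :
    0 < 1 - α * y ∧ 0 < 1 + (1 - α) * y := by
  have : y * α < 1 := (lt_div_iff₀ hα0).mp hy.2
  constructor <;> nlinarith [hy.1]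

lemma log_div_Psi (hα0 : 0 < α) (hy : y ∈ Set.Ioo 0 (1 / α)) :
    Real.log (y / Psi α y) = logOverPsi α y := by
  obtain ⟨h1, h2⟩ := pos_of_mem_Ioo_inv hα0 hy
  have hr1 : 0 < (1 - α * y) ^ α := Real.rpow_pos_of_pos h1 α
  have hr2 : 0 < (1 + (1 - α) * y) ^ (1 - α) := Real.rpow_pos_of_pos h2 (1 - α)
  rw [Psi, Real.log_div hy.1.ne' (by positivity), Real.log_mul hr1.ne' hr2.ne',
    Real.log_rpow h1, Real.log_rpow h2, logOverPsi]
  ring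

lemma hasDerivAt_logOverPsi (hα0 : 0 < α) (hy : y ∈ Set.Ioo 0 (1 / α)) :
    HasDerivAt (logOverPsi α)
      (y⁻¹ + α ^ 2 / (1 - α * y) - (1 - α) ^ 2 / (1 + (1 - α) * y)) y := by
  obtain ⟨h1, h2⟩ := pos_of_mem_Ioo_inv hα0 hy
  have da : HasDerivAt (fun y : ℝ => 1 - α * y) (-α) y := by
    simpa using ((hasDerivAt_id y).const_mul α).const_sub 1
  have db : HasDerivAt (fun y : ℝ => 1 + (1 - α) * y) (1 - α) y := by
    simpa using ((hasDerivAt_id y).const_mul (1 - α)).const_add 1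
  have := ((Real.hasDerivAt_log hy.1.ne').sub ((da.log h1.ne').const_mul α)).sub
    ((db.log h2.ne').const_mul (1 - α))
  exact this.congr_deriv (by ring)

lemma strictMonoOn_logOverPsi (hα0 : 0 < α) (hα1 : α < 1) :
    StrictMonoOn (logOverPsi α) (Set.Ioo 0 (1 / α)) := by
  refine strictMonoOn_of_deriv_pos (convex_Ioo _ _)
    (fun y hy => (hasDerivAt_logOverPsi hα0 hy).continuousAt.continuousWithinAt)
    (fun y hy => ?_)
  rw [interior_Ioo] at hy
  rw [(hasDerivAt_logOverPsi hα0 hy).deriv]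
  obtain ⟨h1, h2⟩ := pos_of_mem_Ioo_inv hα0 hy
  have hy0 := hy.1
  have hlt : (1 - α) ^ 2 / (1 + (1 - α) * y) < y⁻¹ := by
    rw [inv_eq_one_div, div_lt_div_iff₀ h2 hy0]
    nlinarith [mul_pos hα0 (mul_pos (sub_pos.2 hα1) hy0)]
  linarith [div_nonneg (sq_nonneg α) h1.le]

end LogOverPsi

lemma IsEquilib.inMomentSpan_logOverPsi {N d : ℕ} {α : ℝ} (hα0 : 0 < α)
    {p : Fin N → Fin d → ℝ} {P : Fin N → ℝ} (hP : IsEquilib α p P) :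
    InMomentSpan p (fun i => logOverPsi α (P i)) := by
  obtain ⟨hbounds, K, b, c, hK, hEq⟩ := hP
  refine ⟨Real.log K, -c, -b, fun i => ?_⟩
  have h := congrArg Real.log (hEq i)
  rw [log_div_Psi hα0 (hbounds i), Real.log_mul hK.ne' (Real.exp_ne_zero _),
    Real.log_exp] at h
  simp only [h, Pi.neg_apply, neg_mul, Finset.sum_neg_distrib]
  ring

lemma dotN_eq_of_inMomentSpan {N d : ℕ} {p : Fin N → Fin d → ℝ} {φ : Fin N → ℝ}
    (hφ : InMomentSpan p φ) {P P' : Fin N → ℝ}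
    (h1 : dotN (fun _ => 1) P = dotN (fun _ => 1) P')
    (h2 : ∀ m : Fin d, dotN (fun i => p i m) P = dotN (fun i => p i m) P')
    (h3 : dotN (fun i => ∑ m, (p i m) ^ 2) P = dotN (fun i => ∑ m, (p i m) ^ 2) P') :
    dotN φ P = dotN φ P' := by
  obtain ⟨a, c, b, hφ⟩ := hφ
  have expand : ∀ Q : Fin N → ℝ, dotN φ Q = a * dotN (fun _ => 1) Q
      + ∑ m, b m * dotN (fun i => p i m) Q + c * dotN (fun i => ∑ m, (p i m) ^ 2) Q := by
    intro Q
    simp only [dotN, hφ, add_mul, Finset.sum_add_distrib, Finset.mul_sum, Finset.sum_mul,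
      one_mul, mul_assoc]
    rw [Finset.sum_comm]
  simp only [expand, h1, h2, h3]

theorem stmt12_general {N d : ℕ}
    (α : ℝ) (hα0 : 0 < α) (hα1 : α < 1)
    (p : Fin N → Fin d → ℝ)
    (P P' : Fin N → ℝ) (hP : IsEquilib α p P) (hP' : IsEquilib α p P')
    (h1 : dotN (fun _ => 1) P = dotN (fun _ => 1) P')
    (h2 : ∀ m : Fin d, dotN (fun i => p i m) P = dotN (fun i => p i m) P')
    (h3 : dotN (fun i => ∑ m, (p i m) ^ 2) P = dotN (fun i => ∑ m, (p i m) ^ 2) P') :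
    P = P' := by
  set φ : Fin N → ℝ := fun i => logOverPsi α (P i)
  set φ' : Fin N → ℝ := fun i => logOverPsi α (P' i)
  have hφ := dotN_eq_of_inMomentSpan (hP.inMomentSpan_logOverPsi hα0) h1 h2 h3
  have hφ' := dotN_eq_of_inMomentSpan (hP'.inMomentSpan_logOverPsi hα0) h1 h2 h3
  have orthogonal : ∑ i, (P i - P' i) * (φ i - φ' i) = 0 := by
    have : ∑ i, (P i - P' i) * (φ i - φ' i)
        = (dotN φ P - dotN φ P') - (dotN φ' P - dotN φ' P') := by
      simp only [dotN, ← Finset.sum_sub_distrib]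
      exact Finset.sum_congr rfl fun i _ => by ring
    rw [this, hφ, hφ', sub_self, sub_self, sub_self]
  exact (strictMonoOn_logOverPsi hα0 hα1).eq_of_sum_sub_mul_sub_eq_zero
    (fun i => hP.1 i) (fun i => hP'.1 i) orthogonal

/-- Lemma 1: uniqueness of the equilibrium distribution with given
moments. -/
theorem stmt12 {N d : ℕ} (hN : 0 < N) (hd : 0 < d)
    (α : ℝ) (hα0 : 0 < α) (hα1 : α < 1)
    (p : Fin N → Fin d → ℝ)
    (P P' : Fin N → ℝ) (hP : IsEquilib α p P) (hP' : IsEquilib α p P')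
    (h1 : dotN (fun _ => 1) P = dotN (fun _ => 1) P')
    (h2 : ∀ m : Fin d, dotN (fun i => p i m) P = dotN (fun i => p i m) P')
    (h3 : dotN (fun i => ∑ m, (p i m) ^ 2) P = dotN (fun i => ∑ m, (p i m) ^ 2) P') :
    P = P' :=
  stmt12_general α hα0 hα1 p P P' hP hP' h1 h2 h3
end

section
/- (Weak form of the linearized collision operator.) For all vectors f, g ∈ ℝ^N, ⟨g, Lf⟩ = (1/4) Σ_{i,j,k,l=1}^N Γ_{ij}^{kl} P_i P_j Ψ_α(P_k) Ψ_α(P_l) (f_i/R_i^{1/2} + f_j/R_j^{1/2} − f_k/R_k^{1/2} − f_l/R_l^{1/2}) (g_i/R_i^{1/2} + g_j/R_j^{1/2} − g_k/R_k^{1/2} − g_l/R_l^{1/2}). -/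
open Real Finset Filter Set

/-!
At an equilibrium, `P i / Ψ(P i)` is the exponential of a collision invariant, so every
collision with `Γ i j k l ≠ 0` is in detailed balance:
`P k P l Ψ(P i) Ψ(P j) = P i P j Ψ(P k) Ψ(P l)`. Hence all four coefficients of `L` carry the
same weight `W = Γ P_i P_j Ψ(P_k) Ψ(P_l)`, and `⟨g, Lf⟩ = Σ W (u_i + u_j - u_k - u_l) v_i` with
`u = f / √R`, `v = g / √R`. The weight is invariant under `i ↔ j` and under `(i,j) ↔ (k,l)`,
which turns `v_j`, `v_k`, `v_l` into `v_i`, `-v_i`, `-v_j`; averaging the four forms gives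
the symmetric expression.
-/

section FourfoldSums

variable {ι M R : Type*} [Fintype ι]

theorem Fintype.sum_four_swap_pairs [AddCommMonoid M] (F : ι → ι → ι → ι → M) :
    ∑ i, ∑ j, ∑ k, ∑ l, F k l i j = ∑ i, ∑ j, ∑ k, ∑ l, F i j k l := by
  simpa only [Fintype.sum_prod_type] using
    Finset.sum_comm (s := univ) (t := univ) (f := fun (x y : ι × ι) => F y.1 y.2 x.1 x.2)

theorem four_mul_sum_eq_sum_symmetrized [CommRing R] (W : ι → ι → ι → ι → R) (u v : ι → R)
    (hswap : ∀ i j k l, W j i k l = W i j k l) (hpair : ∀ i j k l, W k l i j = W i j k l) :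
    4 * ∑ i, ∑ j, ∑ k, ∑ l, W i j k l * (u i + u j - u k - u l) * v i =
      ∑ i, ∑ j, ∑ k, ∑ l, W i j k l * (u i + u j - u k - u l) * (v i + v j - v k - v l) := by
  have hj : ∑ i, ∑ j, ∑ k, ∑ l, W i j k l * (u i + u j - u k - u l) * v j =
      ∑ i, ∑ j, ∑ k, ∑ l, W i j k l * (u i + u j - u k - u l) * v i := by
    rw [Finset.sum_comm]
    congr! 4
    rw [hswap]; ring
  have hk : ∑ i, ∑ j, ∑ k, ∑ l, W i j k l * (u i + u j - u k - u l) * v k =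
      -∑ i, ∑ j, ∑ k, ∑ l, W i j k l * (u i + u j - u k - u l) * v i := by
    rw [← Fintype.sum_four_swap_pairs]
    simp only [← Finset.sum_neg_distrib]
    congr! 4
    rw [hpair]; ring
  have hl : ∑ i, ∑ j, ∑ k, ∑ l, W i j k l * (u i + u j - u k - u l) * v l =
      -∑ i, ∑ j, ∑ k, ∑ l, W i j k l * (u i + u j - u k - u l) * v j := by
    rw [← Fintype.sum_four_swap_pairs]
    simp only [← Finset.sum_neg_distrib]
    congr! 4
    rw [hpair]; ring
  simp only [mul_sub (_ * _), mul_add (_ * _), Finset.sum_add_distrib, Finset.sum_sub_distrib,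
    hj, hk, hl]
  ring

end FourfoldSums

section Equilibrium

variable {N d : ℕ} {α : ℝ} {p : Fin N → Fin d → ℝ} {P : Fin N → ℝ}

theorem IsEquilib.psi_ne_zero (hP : IsEquilib α p P) (i : Fin N) : Psi α (P i) ≠ 0 := by
  obtain ⟨-, K, b, c, hK, hrel⟩ := hP
  intro hzero
  have hi := hrel i
  -- `x / 0 = 0`, while the right-hand side is positive
  rw [hzero, div_zero] at hi
  exact (mul_pos hK (exp_pos _)).ne hi

theorem IsEquilib.detailed_balance_of_conserved (hP : IsEquilib α p P) {i j k l : Fin N}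
    (hmom : ∀ m, p i m + p j m = p k m + p l m)
    (hen : (∑ m, (p i m) ^ 2) + (∑ m, (p j m) ^ 2) = (∑ m, (p k m) ^ 2) + (∑ m, (p l m) ^ 2)) :
    P k * P l * Psi α (P i) * Psi α (P j) = P i * P j * Psi α (P k) * Psi α (P l) := by
  obtain ⟨K, b, c, -, hrel⟩ := hP.2
  have hlin : (∑ m, b m * p i m) + ∑ m, b m * p j m = (∑ m, b m * p k m) + ∑ m, b m * p l m := by
    simp only [← Finset.sum_add_distrib, ← mul_add, hmom]
  have hratio : P i / Psi α (P i) * (P j / Psi α (P j)) = P k / Psi α (P k) * (P l / Psi α (P l)) := by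
    rw [hrel i, hrel j, hrel k, hrel l]
    simp only [mul_mul_mul_comm K _ K, ← exp_add]
    congr 2
    linear_combination -hlin - c * hen
  rw [div_mul_div_comm, div_mul_div_comm, div_eq_div_iff (mul_ne_zero (hP.psi_ne_zero i)
    (hP.psi_ne_zero j)) (mul_ne_zero (hP.psi_ne_zero k) (hP.psi_ne_zero l))] at hratio
  linear_combination -hratio

end Equilibrium

section Linearized

variable {N : ℕ} {α : ℝ} {Γ : Fin N → Fin N → Fin N → Fin N → ℝ} {P : Fin N → ℝ}

def DetailedBalance (α : ℝ) (Γ : Fin N → Fin N → Fin N → Fin N → ℝ) (P : Fin N → ℝ) : Prop :=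
  ∀ i j k l, Γ i j k l ≠ 0 →
    P k * P l * Psi α (P i) * Psi α (P j) = P i * P j * Psi α (P k) * Psi α (P l)

theorem GammaOK.detailedBalance {d : ℕ} {p : Fin N → Fin d → ℝ} (hΓ : GammaOK p Γ)
    (hP : IsEquilib α p P) : DetailedBalance α Γ P := fun _ _ _ _ hne =>
  hP.detailed_balance_of_conserved (hΓ.2.2.2 _ _ _ _ hne).1 (hΓ.2.2.2 _ _ _ _ hne).2

theorem DetailedBalance.weight_pair_swap (hbal : DetailedBalance α Γ P)
    (hpair : ∀ i j k l, Γ i j k l = Γ k l i j) (i j k l : Fin N) :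
    Γ k l i j * (P k * P l * Psi α (P i) * Psi α (P j)) =
      Γ i j k l * (P i * P j * Psi α (P k) * Psi α (P l)) := by
  rw [← hpair]
  by_cases hz : Γ i j k l = 0
  · simp [hz]
  · rw [hbal i j k l hz]

theorem DetailedBalance.dotN_Lop (hbal : DetailedBalance α Γ P) (f g : Fin N → ℝ) :
    dotN g (Lop α Γ P f) = ∑ i, ∑ j, ∑ k, ∑ l,
      Γ i j k l * (P i * P j * Psi α (P k) * Psi α (P l)) *
        (f i / √(Rfun α P i) + f j / √(Rfun α P j) - f k / √(Rfun α P k) - f l / √(Rfun α P l)) *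
        (g i / √(Rfun α P i)) := by
  simp only [dotN, Lop, Finset.mul_sum]
  congr! 4 with i - j - k - l -
  by_cases hz : Γ i j k l = 0
  · simp [hz]
  · simp only [Pcoef, mul_comm (P l) (P k), hbal i j k l hz]
    ring

end Linearized

theorem stmt17_general {N d : ℕ}
    (α : ℝ)
    (p : Fin N → Fin d → ℝ) (Γ : Fin N → Fin N → Fin N → Fin N → ℝ)
    (hΓ : GammaOK p Γ)
    (P : Fin N → ℝ) (hP : IsEquilib α p P)
    (f g : Fin N → ℝ) :
    dotN g (Lop α Γ P f) =
      (1 / 4) * ∑ i, ∑ j, ∑ k, ∑ l,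
        Γ i j k l * (P i * P j * Psi α (P k) * Psi α (P l)) *
        (f i / Real.sqrt (Rfun α P i) + f j / Real.sqrt (Rfun α P j)
          - f k / Real.sqrt (Rfun α P k) - f l / Real.sqrt (Rfun α P l)) *
        (g i / Real.sqrt (Rfun α P i) + g j / Real.sqrt (Rfun α P j)
          - g k / Real.sqrt (Rfun α P k) - g l / Real.sqrt (Rfun α P l)) := by
  have hbal := hΓ.detailedBalance hP
  obtain ⟨-, hswap, hpair, -⟩ := hΓ
  rw [hbal.dotN_Lop, ← four_mul_sum_eq_sum_symmetrized _ _ _ (fun i j k l => by rw [hswap]; ring)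
    (hbal.weight_pair_swap hpair)]
  ring

/-- Lemma 2: weak form of the linearized collision operator. -/
theorem stmt17 {N d : ℕ} (hN : 0 < N) (hd : 0 < d)
    (α : ℝ) (hα0 : 0 < α) (hα1 : α < 1)
    (p : Fin N → Fin d → ℝ) (Γ : Fin N → Fin N → Fin N → Fin N → ℝ)
    (hΓ : GammaOK p Γ)
    (P : Fin N → ℝ) (hP : IsEquilib α p P)
    (f g : Fin N → ℝ) :
    dotN g (Lop α Γ P f) =
      (1 / 4) * ∑ i, ∑ j, ∑ k, ∑ l,
        Γ i j k l * (P i * P j * Psi α (P k) * Psi α (P l)) *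
        (f i / Real.sqrt (Rfun α P i) + f j / Real.sqrt (Rfun α P j)
          - f k / Real.sqrt (Rfun α P k) - f l / Real.sqrt (Rfun α P l)) *
        (g i / Real.sqrt (Rfun α P i) + g j / Real.sqrt (Rfun α P j)
          - g k / Real.sqrt (Rfun α P k) - g l / Real.sqrt (Rfun α P l)) :=
  stmt17_general α p Γ hΓ P hP f g
end

section
/- Assume the model is normal. Then the kernel of the linearized collision operator L equals the span of the d+2 vectors R^{1/2}, R^{1/2}·p^1, …, R^{1/2}·p^d, R^{1/2}·|p|², where R^{1/2} = (R_1^{1/2},…,R_N^{1/2}), products are taken componentwise, p^i = (p_1^i,…,p_N^i), and |p|² = (|p_1|²,…,|p_N|²). Equivalently, Lf = 0 if and only if f_i = R_i^{1/2} φ_i for some collision invariant φ. -/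
open Real Finset Filter Set

/-!
Write `f = R^{1/2} φ`. Detailed balance of the equilibrium (`P_i P_j Ψ_k Ψ_l` is symmetric under
`(i,j) ↔ (k,l)` on every allowed collision) turns `L` into
`(Lf)_i = R_i^{-1/2} Σ W_{ijkl} (φ_i + φ_j - φ_k - φ_l)` with nonnegative weights `W` having the
symmetries of `Γ`. Symmetrising gives `4 ⟨f, L f⟩ = Σ W_{ijkl} (φ_i + φ_j - φ_k - φ_l)²`, so `Lf = 0`
forces `φ` to be a collision invariant, and conversely. For a normal model the collision invariants
are spanned by `1`, `p^m` and `|p|²`.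
-/

section CollisionSums

variable {ι : Type*} [Fintype ι]

lemma sum4_comm_pairs (F : ι → ι → ι → ι → ℝ) :
    ∑ i, ∑ j, ∑ k, ∑ l, F i j k l = ∑ i, ∑ j, ∑ k, ∑ l, F k l i j := by
  simpa only [Fintype.sum_prod_type] using
    Finset.sum_comm (s := univ) (t := univ) (f := fun x y : ι × ι => F x.1 x.2 y.1 y.2)

lemma sum4_congr {F G : ι → ι → ι → ι → ℝ} (h : ∀ i j k l, F i j k l = G i j k l) :
    ∑ i, ∑ j, ∑ k, ∑ l, F i j k l = ∑ i, ∑ j, ∑ k, ∑ l, G i j k l := by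
  simp only [h]

lemma eq_zero_of_sum4_eq_zero {F : ι → ι → ι → ι → ℝ} (hF : ∀ i j k l, 0 ≤ F i j k l)
    (hsum : ∑ i, ∑ j, ∑ k, ∑ l, F i j k l = 0) (i j k l : ι) : F i j k l = 0 := by
  have := Fintype.sum_eq_zero_iff_of_nonneg
    (f := fun x : ι × ι × ι × ι => F x.1 x.2.1 x.2.2.1 x.2.2.2) fun x => hF _ _ _ _
  simp only [Fintype.sum_prod_type, funext_iff, Prod.forall] at this
  exact this.1 hsum i j k l

variable {W : ι → ι → ι → ι → ℝ}

lemma four_mul_sum_mul_sum_eq_sum_mul_sq (hswap : ∀ i j k l, W j i k l = W i j k l)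
    (hpair : ∀ i j k l, W k l i j = W i j k l) (φ : ι → ℝ) :
    4 * ∑ i, φ i * ∑ j, ∑ k, ∑ l, W i j k l * (φ i + φ j - φ k - φ l)
      = ∑ i, ∑ j, ∑ k, ∑ l, W i j k l * (φ i + φ j - φ k - φ l) ^ 2 := by
  set D : ι → ι → ι → ι → ℝ := fun i j k l => W i j k l * (φ i + φ j - φ k - φ l) with hD
  have hi : ∑ i, φ i * ∑ j, ∑ k, ∑ l, D i j k l = ∑ i, ∑ j, ∑ k, ∑ l, D i j k l * φ i := by
    simp only [Finset.mul_sum]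
    exact sum4_congr fun _ _ _ _ => mul_comm _ _
  have hj : ∑ i, ∑ j, ∑ k, ∑ l, D i j k l * φ j = ∑ i, ∑ j, ∑ k, ∑ l, D i j k l * φ i := by
    rw [Finset.sum_comm]
    exact sum4_congr fun i j k l => by simp only [hD, hswap]; ring
  have hk : ∑ i, ∑ j, ∑ k, ∑ l, D i j k l * φ k = -∑ i, ∑ j, ∑ k, ∑ l, D i j k l * φ i := by
    rw [sum4_comm_pairs]
    simp only [← Finset.sum_neg_distrib]
    exact sum4_congr fun i j k l => by simp only [hD, hpair]; ring
  have hl : ∑ i, ∑ j, ∑ k, ∑ l, D i j k l * φ l = -∑ i, ∑ j, ∑ k, ∑ l, D i j k l * φ j := by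
    rw [sum4_comm_pairs]
    simp only [← Finset.sum_neg_distrib]
    exact sum4_congr fun i j k l => by simp only [hD, hpair]; ring
  calc 4 * ∑ i, φ i * ∑ j, ∑ k, ∑ l, D i j k l
      = ∑ i, ∑ j, ∑ k, ∑ l, D i j k l * φ i + ∑ i, ∑ j, ∑ k, ∑ l, D i j k l * φ j
          - ∑ i, ∑ j, ∑ k, ∑ l, D i j k l * φ k - ∑ i, ∑ j, ∑ k, ∑ l, D i j k l * φ l := by
        rw [hl, hk, hj, hi]; ring
    _ = ∑ i, ∑ j, ∑ k, ∑ l, D i j k l * (φ i + φ j - φ k - φ l) := by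
        simp only [← Finset.sum_add_distrib, ← Finset.sum_sub_distrib, mul_add, mul_sub]
    _ = _ := by simp only [hD, mul_assoc, sq]

lemma forall_sum_weight_mul_eq_zero_iff (hW : ∀ i j k l, 0 ≤ W i j k l)
    (hswap : ∀ i j k l, W j i k l = W i j k l) (hpair : ∀ i j k l, W k l i j = W i j k l)
    (φ : ι → ℝ) :
    (∀ i, ∑ j, ∑ k, ∑ l, W i j k l * (φ i + φ j - φ k - φ l) = 0) ↔
      ∀ i j k l, W i j k l ≠ 0 → φ i + φ j = φ k + φ l := by
  constructor
  · intro h i j k l hne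
    have hsq := eq_zero_of_sum4_eq_zero (fun i j k l => mul_nonneg (hW i j k l) (sq_nonneg _))
      (by rw [← four_mul_sum_mul_sum_eq_sum_mul_sq hswap hpair φ]; simp [h]) i j k l
    have := pow_eq_zero_iff two_ne_zero |>.mp <| (mul_eq_zero.mp hsq).resolve_left hne
    linarith
  · intro h i
    refine Finset.sum_eq_zero fun j _ => Finset.sum_eq_zero fun k _ =>
      Finset.sum_eq_zero fun l _ => ?_
    by_cases hne : W i j k l = 0
    · rw [hne, zero_mul]
    · rw [h i j k l hne]; ring

end CollisionSums

lemma filling_factors_pos {α y : ℝ} (hy : 0 < y) (hyα : y < 1 / α) :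
    0 < 1 - α * y ∧ 0 < 1 + (1 - α) * y := by
  have hα : 0 < α := one_div_pos.mp (hy.trans hyα)
  have : α * y < 1 := by rwa [lt_div_iff₀ hα, mul_comm] at hyα
  constructor <;> nlinarith

/-- The numerator `P_i P_j Ψ(P_k) Ψ(P_l)` of `P_{ij}^{kl}`. -/
noncomputable def Pweight {N : ℕ} (α : ℝ) (P : Fin N → ℝ) (i j k l : Fin N) : ℝ :=
  P i * P j * Psi α (P k) * Psi α (P l)

noncomputable def collisionWeight {N : ℕ} (α : ℝ) (Γ : Fin N → Fin N → Fin N → Fin N → ℝ)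
    (P : Fin N → ℝ) (i j k l : Fin N) : ℝ :=
  Γ i j k l * Pweight α P i j k l

def collisionInvariants {N : ℕ} (Γ : Fin N → Fin N → Fin N → Fin N → ℝ) :
    Submodule ℝ (Fin N → ℝ) where
  carrier := {φ | IsCollInv Γ φ}
  add_mem' {φ ψ} hφ hψ i j k l hne := by
    simp only [Pi.add_apply]; linarith [hφ i j k l hne, hψ i j k l hne]
  zero_mem' _ _ _ _ _ := by simp
  smul_mem' c φ hφ i j k l hne := by
    simp only [Pi.smul_apply, smul_eq_mul, ← mul_add, hφ i j k l hne]

namespace IsEquilib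

variable {N d : ℕ} {α : ℝ} {p : Fin N → Fin d → ℝ} {P : Fin N → ℝ}

lemma Rfun_pos (hP : IsEquilib α p P) (i : Fin N) : 0 < Rfun α P i := by
  have h := filling_factors_pos (hP.1 i).1 (hP.1 i).2
  exact mul_pos (mul_pos (hP.1 i).1 h.1) h.2

lemma Pweight_pos (hP : IsEquilib α p P) (i j k l : Fin N) : 0 < Pweight α P i j k l := by
  have hΨ (x : Fin N) : 0 < Psi α (P x) := Psi_pos (hP.1 x).1 (hP.1 x).2
  exact mul_pos (mul_pos (mul_pos (hP.1 i).1 (hP.1 j).1) (hΨ k)) (hΨ l)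

/-- Detailed balance: `P/Ψ(P)` is the exponential of a collision invariant. -/
lemma Pweight_comm_pairs (hP : IsEquilib α p P) {i j k l : Fin N}
    (hmom : ∀ m, p i m + p j m = p k m + p l m)
    (hen : (∑ m, p i m ^ 2) + (∑ m, p j m ^ 2) = (∑ m, p k m ^ 2) + (∑ m, p l m ^ 2)) :
    Pweight α P k l i j = Pweight α P i j k l := by
  obtain ⟨K, b, c, -, hK⟩ := hP.2
  set E : Fin N → ℝ := fun x => -(∑ m, b m * p x m) - c * ∑ m, p x m ^ 2
  have hb : (∑ m, b m * p i m) + ∑ m, b m * p j m = (∑ m, b m * p k m) + ∑ m, b m * p l m := by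
    simp only [← Finset.sum_add_distrib, ← mul_add, hmom]
  have hE : E i + E j = E k + E l := by
    simp only [E]; linear_combination -hb - c * hen
  have hratio : P i / Psi α (P i) * (P j / Psi α (P j))
      = P k / Psi α (P k) * (P l / Psi α (P l)) := by
    rw [hK, hK, hK, hK]
    linear_combination K ^ 2 * (by rw [← Real.exp_add, ← Real.exp_add, hE] :
      Real.exp (E i) * Real.exp (E j) = Real.exp (E k) * Real.exp (E l))
  have hΨ (x : Fin N) : Psi α (P x) ≠ 0 := (Psi_pos (hP.1 x).1 (hP.1 x).2).ne'
  rw [div_mul_div_comm, div_mul_div_comm, div_eq_div_iff (mul_ne_zero (hΨ i) (hΨ j))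
    (mul_ne_zero (hΨ k) (hΨ l))] at hratio
  simp only [Pweight]
  linear_combination -hratio

end IsEquilib

section Linearized

variable {N d : ℕ} {α : ℝ} {p : Fin N → Fin d → ℝ} {Γ : Fin N → Fin N → Fin N → Fin N → ℝ}
  {P : Fin N → ℝ}

lemma Lop_apply_eq (hΓ : GammaOK p Γ) (hP : IsEquilib α p P) (f : Fin N → ℝ) (i : Fin N) :
    Lop α Γ P f i = (Real.sqrt (Rfun α P i))⁻¹ * ∑ j, ∑ k, ∑ l, collisionWeight α Γ P i j k l *
      (f i / Real.sqrt (Rfun α P i) + f j / Real.sqrt (Rfun α P j)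
        - f k / Real.sqrt (Rfun α P k) - f l / Real.sqrt (Rfun α P l)) := by
  simp only [Lop, Finset.mul_sum]
  refine Finset.sum_congr rfl fun j _ => Finset.sum_congr rfl fun k _ =>
    Finset.sum_congr rfl fun l _ => ?_
  by_cases hne : Γ i j k l = 0
  · simp [collisionWeight, hne]
  have hbal := hP.Pweight_comm_pairs (hΓ.2.2.2 i j k l hne).1 (hΓ.2.2.2 i j k l hne).2
  simp only [Pcoef, collisionWeight, Pweight] at hbal ⊢
  linear_combination -Γ i j k l / Real.sqrt (Rfun α P i) *
    (f k / Real.sqrt (Rfun α P k) + f l / Real.sqrt (Rfun α P l)) * hbal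

lemma collisionWeight_nonneg (hΓ : GammaOK p Γ) (hP : IsEquilib α p P) (i j k l : Fin N) :
    0 ≤ collisionWeight α Γ P i j k l :=
  mul_nonneg (hΓ.1 i j k l) (hP.Pweight_pos i j k l).le

lemma collisionWeight_comm (hΓ : GammaOK p Γ) (i j k l : Fin N) :
    collisionWeight α Γ P j i k l = collisionWeight α Γ P i j k l := by
  simp only [collisionWeight, Pweight, hΓ.2.1 j i k l]
  ring

lemma collisionWeight_comm_pairs (hΓ : GammaOK p Γ) (hP : IsEquilib α p P) (i j k l : Fin N) :
    collisionWeight α Γ P k l i j = collisionWeight α Γ P i j k l := by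
  by_cases hne : Γ i j k l = 0
  · simp [collisionWeight, hne, ← hΓ.2.2.1 i j k l]
  rw [collisionWeight, collisionWeight, ← hΓ.2.2.1 i j k l,
    hP.Pweight_comm_pairs (hΓ.2.2.2 i j k l hne).1 (hΓ.2.2.2 i j k l hne).2]

lemma collisionWeight_ne_zero_iff (hP : IsEquilib α p P) (i j k l : Fin N) :
    collisionWeight α Γ P i j k l ≠ 0 ↔ Γ i j k l ≠ 0 := by
  simp [collisionWeight, (hP.Pweight_pos i j k l).ne']

lemma Lop_eq_zero_iff (hΓ : GammaOK p Γ) (hP : IsEquilib α p P) (f : Fin N → ℝ) :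
    Lop α Γ P f = 0 ↔ IsCollInv Γ fun i => f i / Real.sqrt (Rfun α P i) := by
  have hR (i : Fin N) : (Real.sqrt (Rfun α P i))⁻¹ ≠ 0 :=
    inv_ne_zero (Real.sqrt_pos.mpr (hP.Rfun_pos i)).ne'
  simp only [funext_iff, Pi.zero_apply, Lop_apply_eq hΓ hP, mul_eq_zero, hR, false_or]
  rw [forall_sum_weight_mul_eq_zero_iff (collisionWeight_nonneg hΓ hP) (collisionWeight_comm hΓ)
    (collisionWeight_comm_pairs hΓ hP)]
  simp only [IsCollInv, collisionWeight_ne_zero_iff hP]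

end Linearized

section CollisionInvariants

variable {N d : ℕ} {p : Fin N → Fin d → ℝ} {Γ : Fin N → Fin N → Fin N → Fin N → ℝ}

lemma IsNormal.collisionInvariants_eq_span (hΓ : GammaOK p Γ) (hn : IsNormal p Γ) :
    collisionInvariants Γ =
      Submodule.span ℝ (insert 1 (insert (fun i => ∑ m, p i m ^ 2)
        (Set.range fun m i => p i m))) := by
  refine le_antisymm (fun φ hφ => ?_) (Submodule.span_le.mpr ?_)
  · obtain ⟨a, c, b, hab⟩ := hn φ hφ
    have : φ = a • 1 + c • (fun i => ∑ m, p i m ^ 2) + ∑ m, b m • fun i => p i m := by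
      ext i
      simp only [hab, Pi.add_apply, Pi.smul_apply, Finset.sum_apply, smul_eq_mul, Pi.one_apply]
      ring
    rw [this]
    refine add_mem (add_mem ?_ ?_) (sum_mem fun m _ => ?_) <;> refine Submodule.smul_mem _ _ ?_ <;>
      exact Submodule.subset_span (by simp)
  · rintro φ (rfl | rfl | ⟨m, rfl⟩) i j k l hne
    · simp
    · exact (hΓ.2.2.2 i j k l hne).2
    · exact (hΓ.2.2.2 i j k l hne).1 m

lemma IsNormal.exists_isCollInv_mul_iff_mem_span (hΓ : GammaOK p Γ) (hn : IsNormal p Γ)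
    (g f : Fin N → ℝ) :
    (∃ φ, IsCollInv Γ φ ∧ ∀ i, f i = g i * φ i) ↔
      f ∈ Submodule.span ℝ (insert g (insert (fun i => g i * ∑ m, p i m ^ 2)
        (Set.range fun m i => g i * p i m))) := by
  have himage : insert g (insert (fun i => g i * ∑ m, p i m ^ 2) (Set.range fun m i => g i * p i m))
      = LinearMap.mulLeft ℝ g '' insert 1 (insert (fun i => ∑ m, p i m ^ 2)
          (Set.range fun m i => p i m)) := by
    simp only [Set.image_insert_eq, ← Set.range_comp, LinearMap.mulLeft_apply, mul_one]
    rfl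
  rw [himage, Submodule.span_image, ← hn.collisionInvariants_eq_span hΓ, Submodule.mem_map]
  simp only [LinearMap.mulLeft_apply, funext_iff, Pi.mul_apply, eq_comm (a := g _ * _)]
  rfl

lemma isCollInv_div_iff {g : Fin N → ℝ} (hg : ∀ i, g i ≠ 0) (f : Fin N → ℝ) :
    IsCollInv Γ (fun i => f i / g i) ↔ ∃ φ, IsCollInv Γ φ ∧ ∀ i, f i = g i * φ i := by
  refine ⟨fun h => ⟨_, h, fun i => (mul_div_cancel₀ _ (hg i)).symm⟩, ?_⟩
  rintro ⟨φ, hφ, hf⟩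
  convert hφ using 2 with i
  rw [hf, mul_div_cancel_left₀ _ (hg i)]

end CollisionInvariants

theorem stmt19_general {N d : ℕ} (α : ℝ)
    (p : Fin N → Fin d → ℝ) (Γ : Fin N → Fin N → Fin N → Fin N → ℝ)
    (hΓ : GammaOK p Γ) (hnorm : IsNormal p Γ)
    (P : Fin N → ℝ) (hP : IsEquilib α p P) :
    (∀ f : Fin N → ℝ, Lop α Γ P f = 0 ↔
      f ∈ Submodule.span ℝ
        (insert (fun i => Real.sqrt (Rfun α P i))
          (insert (fun i => Real.sqrt (Rfun α P i) * ∑ m, (p i m) ^ 2)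
            (Set.range (fun m : Fin d => fun i => Real.sqrt (Rfun α P i) * p i m))))) ∧
    (∀ f : Fin N → ℝ, Lop α Γ P f = 0 ↔
      ∃ φ : Fin N → ℝ, IsCollInv Γ φ ∧ ∀ i, f i = Real.sqrt (Rfun α P i) * φ i) := by
  have hkernel (f : Fin N → ℝ) : Lop α Γ P f = 0 ↔
      ∃ φ : Fin N → ℝ, IsCollInv Γ φ ∧ ∀ i, f i = Real.sqrt (Rfun α P i) * φ i := by
    rw [Lop_eq_zero_iff hΓ hP]
    exact isCollInv_div_iff (fun i => (Real.sqrt_pos.mpr (hP.Rfun_pos i)).ne') f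
  exact ⟨fun f => (hkernel f).trans (hnorm.exists_isCollInv_mul_iff_mem_span hΓ _ f), hkernel⟩

/-- Proposition: the kernel of the linearized collision operator for
normal models. -/
theorem stmt19 {N d : ℕ} (hN : 0 < N) (hd : 0 < d)
    (α : ℝ) (hα0 : 0 < α) (hα1 : α < 1)
    (p : Fin N → Fin d → ℝ) (Γ : Fin N → Fin N → Fin N → Fin N → ℝ)
    (hΓ : GammaOK p Γ) (hnorm : IsNormal p Γ)
    (P : Fin N → ℝ) (hP : IsEquilib α p P) :
    (∀ f : Fin N → ℝ, Lop α Γ P f = 0 ↔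
      f ∈ Submodule.span ℝ
        (insert (fun i => Real.sqrt (Rfun α P i))
          (insert (fun i => Real.sqrt (Rfun α P i) * ∑ m, (p i m) ^ 2)
            (Set.range (fun m : Fin d => fun i => Real.sqrt (Rfun α P i) * p i m))))) ∧
    (∀ f : Fin N → ℝ, Lop α Γ P f = 0 ↔
      ∃ φ : Fin N → ℝ, IsCollInv Γ φ ∧ ∀ i, f i = Real.sqrt (Rfun α P i) * φ i) :=
  stmt19_general α p Γ hΓ hnorm P hP
end
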